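/- arXiv:2307.04142 — 2 statements merged into one kernel-verified Lean document; each statement's English description precedes it below -/
import Mathlib

section
/- The function C(Y,t) = (1/2)[exp(Y√(Sc·K))·erfc(Y√Sc/(2√t) + √(K t)) + exp(−Y√(Sc·K))·erfc(Y√Sc/(2√t) − √(K t))] satisfies the reaction–diffusion equation ∂C/∂t = (1/Sc)·∂²C/∂Y² − K·C for all Y > 0, t > 0. -/
open Real Filter

noncomputable def erfc (x : ℝ) : ℝ :=
  (2 / Real.sqrt Real.pi) * ∫ s in Set.Ioi x, Real.exp (-s ^ 2)

/-!
With `ξ = √Sc · Y` and `k = √K`, `C` is the average of `u_k` and `u_{-k}`, where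
`u_k(ξ, t) = exp (k ξ) erfc (ξ / (2√t) + k √t)`. Each `u_k` alone solves `∂ₜu = ∂ξ²u - k² u`:
with `η = ξ / (2√t) + k √t`, both sides equal `exp (k ξ) erfc' η ∂ₜη`, because
`erfc'' η = -2 η erfc' η`. The substitution `ξ = √Sc · Y` turns `∂ξ²` into `(1 / Sc) ∂Y²`.
-/

open MeasureTheory Set

theorem hasDerivAt_erfc (x : ℝ) : HasDerivAt erfc (-(2 / √π) * exp (-x ^ 2)) x := by
  have hint : Integrable fun s : ℝ => exp (-s ^ 2) := by
    simpa using integrable_exp_neg_mul_sq one_pos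
  have hcont : Continuous fun s : ℝ => exp (-s ^ 2) := by fun_prop
  have hform : erfc =
      fun y => 2 / √π * ((∫ s in Ioi 0, exp (-s ^ 2)) - ∫ s in 0..y, exp (-s ^ 2)) := by
    funext y
    rw [erfc, ← intervalIntegral.integral_Ioi_sub_Ioi' hint.integrableOn hint.integrableOn,
      sub_sub_cancel]
  rw [hform]
  exact (((hcont.integral_hasStrictDerivAt 0 x).hasDerivAt.const_sub _).const_mul
    (2 / √π)).congr_deriv (by ring)

theorem HasDerivAt.erfc {f : ℝ → ℝ} {f' x : ℝ} (hf : HasDerivAt f f' x) :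
    HasDerivAt (fun y => _root_.erfc (f y)) (-(2 / √π) * Real.exp (-f x ^ 2) * f') x :=
  (hasDerivAt_erfc (f x)).comp x hf

noncomputable def erfcWave (k x t : ℝ) : ℝ :=
  exp (k * x) * erfc (x / (2 * √t) + k * √t)

noncomputable def erfcWaveDx (k x t : ℝ) : ℝ :=
  exp (k * x) * (k * erfc (x / (2 * √t) + k * √t)
    - 2 / √π * exp (-(x / (2 * √t) + k * √t) ^ 2) / (2 * √t))

noncomputable def erfcWaveDt (k x t : ℝ) : ℝ :=
  -(2 / √π) * exp (k * x) * exp (-(x / (2 * √t) + k * √t) ^ 2)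
    * (k / (2 * √t) - x / (4 * t * √t))

theorem hasDerivAt_erfcWave_time (k x : ℝ) {t : ℝ} (ht : 0 < t) :
    HasDerivAt (erfcWave k x) (erfcWaveDt k x t) t := by
  have harg : HasDerivAt (fun τ => x / (2 * √τ) + k * √τ)
      (k / (2 * √t) - x / (4 * t * √t)) t := by
    refine ((hasDerivAt_const t x).fun_div ((hasDerivAt_sqrt ht.ne').const_mul 2) (by positivity)
      |>.fun_add ((hasDerivAt_sqrt ht.ne').const_mul k)).congr_deriv ?_
    field_simp
    rw [sq_sqrt ht.le]
    ring
  refine (harg.erfc.const_mul (exp (k * x))).congr_deriv ?_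
  rw [erfcWaveDt]
  ring

theorem hasDerivAt_erfcWave_space (k t x : ℝ) :
    HasDerivAt (fun x => erfcWave k x t) (erfcWaveDx k x t) x := by
  have harg : HasDerivAt (fun x => x / (2 * √t) + k * √t) (1 / (2 * √t)) x :=
    ((hasDerivAt_id x).div_const (2 * √t)).add_const (k * √t)
  have hexp : HasDerivAt (fun x => exp (k * x)) (exp (k * x) * k) x := by
    simpa using ((hasDerivAt_id x).const_mul k).exp
  refine (hexp.mul harg.erfc).congr_deriv ?_
  rw [erfcWaveDx]
  ring

theorem hasDerivAt_erfcWaveDx (k : ℝ) {t : ℝ} (ht : 0 < t) (x : ℝ) :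
    HasDerivAt (fun x => erfcWaveDx k x t) (erfcWaveDt k x t + k ^ 2 * erfcWave k x t) x := by
  have harg : HasDerivAt (fun x => x / (2 * √t) + k * √t) (1 / (2 * √t)) x :=
    ((hasDerivAt_id x).div_const (2 * √t)).add_const (k * √t)
  have hexp : HasDerivAt (fun x => exp (k * x)) (exp (k * x) * k) x := by
    simpa using ((hasDerivAt_id x).const_mul k).exp
  have hgauss : HasDerivAt (fun x => exp (-(x / (2 * √t) + k * √t) ^ 2))
      (exp (-(x / (2 * √t) + k * √t) ^ 2) * -(2 * (x / (2 * √t) + k * √t) * (1 / (2 * √t))))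
      x := by
    simpa using (harg.fun_pow 2).fun_neg.exp
  refine (hexp.mul ((harg.erfc.const_mul k).fun_sub
    ((hgauss.const_mul (2 / √π)).div_const (2 * √t)))).congr_deriv ?_
  rw [erfcWaveDt, erfcWave]
  field_simp
  rw [sq_sqrt ht.le]
  ring

theorem stmt_2 (Sc K : ℝ) (hSc : 0 < Sc) (hK : 0 < K) :
    ∀ Y t : ℝ, 0 < Y → 0 < t →
    (let C : ℝ → ℝ → ℝ := fun Y t =>
      (1 / 2) * (Real.exp (Y * Real.sqrt (Sc * K)) * erfc (Y * Real.sqrt Sc / (2 * Real.sqrt t) + Real.sqrt (K * t))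
        + Real.exp (-(Y * Real.sqrt (Sc * K))) * erfc (Y * Real.sqrt Sc / (2 * Real.sqrt t) - Real.sqrt (K * t)))
    deriv (fun τ => C Y τ) t = (1 / Sc) * deriv (deriv (fun y => C y t)) Y - K * C Y t) := by
  intro Y t _ ht C
  have hC : ∀ y τ, C y τ = 1 / 2 * (erfcWave √K (√Sc * y) τ + erfcWave (-√K) (√Sc * y) τ) := by
    intro y τ
    simp only [C, erfcWave, sqrt_mul hSc.le, sqrt_mul hK.le]
    ring_nf
  set s := √Sc
  set k := √K
  have hs : s * s = Sc := mul_self_sqrt hSc.le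
  have hk : k ^ 2 = K := sq_sqrt hK.le
  have hscale (y : ℝ) : HasDerivAt (fun y => s * y) s y := hasDerivAt_const_mul s
  have hdt : HasDerivAt (fun τ => C Y τ)
      (1 / 2 * (erfcWaveDt k (s * Y) t + erfcWaveDt (-k) (s * Y) t)) t := by
    simp only [hC]
    exact ((hasDerivAt_erfcWave_time _ _ ht).add (hasDerivAt_erfcWave_time _ _ ht)).const_mul _
  have hdx : deriv (fun y => C y t) =
      fun y => 1 / 2 * (erfcWaveDx k (s * y) t * s + erfcWaveDx (-k) (s * y) t * s) := by
    funext y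
    simp only [hC]
    exact ((((hasDerivAt_erfcWave_space _ t _).comp y (hscale y)).add
      ((hasDerivAt_erfcWave_space _ t _).comp y (hscale y))).const_mul _).deriv
  have hdxx : HasDerivAt (deriv fun y => C y t)
      (1 / 2 * ((erfcWaveDt k (s * Y) t + k ^ 2 * erfcWave k (s * Y) t) * s * s
        + (erfcWaveDt (-k) (s * Y) t + (-k) ^ 2 * erfcWave (-k) (s * Y) t) * s * s)) Y := by
    rw [hdx]
    exact (((((hasDerivAt_erfcWaveDx _ ht _).comp Y (hscale Y)).mul_const _).add
      (((hasDerivAt_erfcWaveDx _ ht _).comp Y (hscale Y)).mul_const _)).const_mul _)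
  rw [hdt.deriv, hdxx.deriv, hC, neg_sq, hk]
  simp only [mul_assoc, hs]
  field_simp
  ring
end

section
/- For fixed Y > 0, K > 0 and Sc > 0, the function t ↦ (1/2)[exp(Y√(Sc K))erfc(Y√Sc/(2√t) + √(Kt)) + exp(−Y√(Sc K))erfc(Y√Sc/(2√t) − √(Kt))] is strictly increasing in t on (0, ∞). -/
open Real Filter

lemma erfc_hasDerivAt (x : ℝ) :
    HasDerivAt erfc (-(2 / Real.sqrt Real.pi) * Real.exp (-x ^ 2)) x := by
  have hg : Continuous fun s : ℝ => Real.exp (-s ^ 2) := by continuity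
  have hint : MeasureTheory.Integrable (fun s : ℝ => Real.exp (-s ^ 2)) := by
    simpa using integrable_exp_neg_mul_sq (one_pos (α := ℝ))
  have key : ∀ y : ℝ, erfc y = (2 / Real.sqrt Real.pi) *
      (((∫ s, Real.exp (-s ^ 2)) - ∫ s in Set.Iic (0:ℝ), Real.exp (-s ^ 2)) -
        ∫ s in (0:ℝ)..y, Real.exp (-s ^ 2)) := by
    intro y
    unfold erfc
    rw [← intervalIntegral.integral_Iic_sub_Iic hint.integrableOn hint.integrableOn]
    have h := MeasureTheory.integral_add_compl (measurableSet_Iic (a := y)) hint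
    rw [Set.compl_Iic] at h
    rw [← h]; ring
  have h1 : HasDerivAt (fun y => ∫ s in (0:ℝ)..y, Real.exp (-s ^ 2)) (Real.exp (-x ^ 2)) x :=
    intervalIntegral.integral_hasDerivAt_right (hg.intervalIntegrable _ _)
      (hg.stronglyMeasurableAtFilter _ _) hg.continuousAt
  have h2 := ((h1.const_sub ((∫ s, Real.exp (-s ^ 2)) - ∫ s in Set.Iic (0:ℝ), Real.exp (-s ^ 2))).const_mul (2 / Real.sqrt Real.pi))
  have : (fun y => (2 / Real.sqrt Real.pi) *
      (((∫ s, Real.exp (-s ^ 2)) - ∫ s in Set.Iic (0:ℝ), Real.exp (-s ^ 2)) -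
        ∫ s in (0:ℝ)..y, Real.exp (-s ^ 2))) = erfc := by
    funext y; exact (key y).symm
  rw [this] at h2
  exact h2.congr_deriv (by ring)

theorem stmt_14 (Y K Sc : ℝ) (hY : 0 < Y) (hK : 0 < K) (hSc : 0 < Sc) :
    StrictMonoOn (fun t : ℝ =>
      (1 / 2) * (Real.exp (Y * Real.sqrt (Sc * K)) * erfc (Y * Real.sqrt Sc / (2 * Real.sqrt t) + Real.sqrt (K * t))
        + Real.exp (-(Y * Real.sqrt (Sc * K))) * erfc (Y * Real.sqrt Sc / (2 * Real.sqrt t) - Real.sqrt (K * t))))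
      (Set.Ioi 0) := by
  have hπ : 0 < Real.sqrt Real.pi := Real.sqrt_pos.2 Real.pi_pos
  set a := Y * Real.sqrt Sc with ha
  have ha0 : 0 < a := mul_pos hY (Real.sqrt_pos.2 hSc)
  have hderiv : ∀ t ∈ Set.Ioi (0:ℝ), HasDerivAt (fun t : ℝ =>
      (1 / 2) * (Real.exp (Y * Real.sqrt (Sc * K)) * erfc (Y * Real.sqrt Sc / (2 * Real.sqrt t) + Real.sqrt (K * t))
        + Real.exp (-(Y * Real.sqrt (Sc * K))) * erfc (Y * Real.sqrt Sc / (2 * Real.sqrt t) - Real.sqrt (K * t))))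
      (Real.exp (-(a^2/(4*t)) - K*t) * a / (2 * Real.sqrt Real.pi * t * Real.sqrt t)) t := by
    intro t ht
    have ht : 0 < t := ht
    have hst : 0 < Real.sqrt t := Real.sqrt_pos.2 ht
    have hsKt : 0 < Real.sqrt (K * t) := Real.sqrt_pos.2 (mul_pos hK ht)
    have ht2 : Real.sqrt t * Real.sqrt t = t := Real.mul_self_sqrt ht.le
    have hKt : Real.sqrt (K * t) = Real.sqrt K * Real.sqrt t := Real.sqrt_mul hK.le t
    have hK2 : Real.sqrt K * Real.sqrt K = K := Real.mul_self_sqrt hK.le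
    have hc : Real.sqrt (Sc * K) = Real.sqrt Sc * Real.sqrt K := Real.sqrt_mul hSc.le K
    have h1 : HasDerivAt (fun t : ℝ => a / (2 * Real.sqrt t))
        (-(a * (2 * (1 / (2 * Real.sqrt t)))) / (2 * Real.sqrt t)^2) t := by
      have hs := (Real.hasDerivAt_sqrt ht.ne').const_mul 2
      have := (hasDerivAt_const t a).div hs (by positivity)
      exact this.congr_deriv (by ring)
    have h2 : HasDerivAt (fun t : ℝ => Real.sqrt (K * t)) (1 / (2 * Real.sqrt (K * t)) * K) t := by
      have hKt0 : K * t ≠ 0 := (mul_pos hK ht).ne'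
      have hid : HasDerivAt (fun t : ℝ => K * t) K t := by
        simpa using (hasDerivAt_id t).const_mul K
      exact (Real.hasDerivAt_sqrt hKt0).comp t hid
    have hu := h1.add h2
    have hv := h1.sub h2
    have hU := (erfc_hasDerivAt (a / (2 * Real.sqrt t) + Real.sqrt (K * t))).comp t hu
    have hV := (erfc_hasDerivAt (a / (2 * Real.sqrt t) - Real.sqrt (K * t))).comp t hv
    have hF := ((hU.const_mul (Real.exp (Y * Real.sqrt (Sc * K)))).add
      (hV.const_mul (Real.exp (-(Y * Real.sqrt (Sc * K)))))).const_mul (1/2 : ℝ)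
    refine hF.congr_deriv ?_
    symm
    have e1 : Real.exp (Y * Real.sqrt (Sc * K)) *
        Real.exp (-(a / (2 * Real.sqrt t) + Real.sqrt (K * t))^2) =
        Real.exp (-(a^2/(4*t)) - K*t) := by
      rw [← Real.exp_add]; congr 1
      rw [hKt, hc, ha]
      field_simp
      ring_nf
      linear_combination (4*Y^2*Real.sqrt Sc^2 - 16*K*t*Real.sqrt t^2) * ht2 + (-16*t*Real.sqrt t^4) * hK2
    have e2 : Real.exp (-(Y * Real.sqrt (Sc * K))) *
        Real.exp (-(a / (2 * Real.sqrt t) - Real.sqrt (K * t))^2) =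
        Real.exp (-(a^2/(4*t)) - K*t) := by
      rw [← Real.exp_add]; congr 1
      rw [hKt, hc, ha]
      field_simp
      ring_nf
      linear_combination (4*Y^2*Real.sqrt Sc^2 - 16*K*t*Real.sqrt t^2) * ht2 + (-16*t*Real.sqrt t^4) * hK2
    rw [show (1:ℝ)/2 * (Real.exp (Y * Real.sqrt (Sc * K)) *
          (-(2 / Real.sqrt Real.pi) * Real.exp (-(a / (2 * Real.sqrt t) + Real.sqrt (K * t)) ^ 2) *
            (-(a * (2 * (1 / (2 * Real.sqrt t)))) / (2 * Real.sqrt t) ^ 2 + 1 / (2 * Real.sqrt (K * t)) * K)) +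
        Real.exp (-(Y * Real.sqrt (Sc * K))) *
          (-(2 / Real.sqrt Real.pi) * Real.exp (-(a / (2 * Real.sqrt t) - Real.sqrt (K * t)) ^ 2) *
            (-(a * (2 * (1 / (2 * Real.sqrt t)))) / (2 * Real.sqrt t) ^ 2 - 1 / (2 * Real.sqrt (K * t)) * K))) =
      (Real.exp (Y * Real.sqrt (Sc * K)) * Real.exp (-(a / (2 * Real.sqrt t) + Real.sqrt (K * t)) ^ 2)) *
        (-(1 / Real.sqrt Real.pi) * (-(a * (2 * (1 / (2 * Real.sqrt t)))) / (2 * Real.sqrt t) ^ 2 + 1 / (2 * Real.sqrt (K * t)) * K)) +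
      (Real.exp (-(Y * Real.sqrt (Sc * K))) * Real.exp (-(a / (2 * Real.sqrt t) - Real.sqrt (K * t)) ^ 2)) *
        (-(1 / Real.sqrt Real.pi) * (-(a * (2 * (1 / (2 * Real.sqrt t)))) / (2 * Real.sqrt t) ^ 2 - 1 / (2 * Real.sqrt (K * t)) * K)) from by ring,
      e1, e2]
    have h3 : 2 * Real.sqrt Real.pi * t * Real.sqrt t = 2 * Real.sqrt Real.pi * Real.sqrt t ^ 3 := by
      rw [pow_succ, sq, ht2]; ring
    rw [h3]
    field_simp
    ring
  refine strictMonoOn_of_deriv_pos (convex_Ioi 0)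
    (fun t ht => (hderiv t ht).continuousAt.continuousWithinAt) (fun t ht => ?_)
  rw [interior_Ioi] at ht
  have ht' : 0 < t := ht
  rw [(hderiv t ht).deriv]
  have hst : 0 < Real.sqrt t := Real.sqrt_pos.2 ht'
  exact div_pos (mul_pos (Real.exp_pos _) ha0)
    (mul_pos (mul_pos (mul_pos two_pos hπ) ht') hst)
end
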